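/- arXiv:1605.06980 — 7 statements merged into one kernel-verified Lean document; each statement's English description precedes it below -/
import Mathlib

section
/- Let G be a finite simple graph on vertex set V = {x_1,...,x_n} with edge set E, and let π : k[E] → k[V] be the monomial map sending each edge variable e = {x_a, x_b} to x_a x_b. For a monomial α = α_1 α_2 with gcd(α_1, α_2) = 1, if the induced subgraph of G on supp(α) is the disjoint union of the induced subgraphs on supp(α_1) and supp(α_2), then the simplicial complex Γ(α) equals the join Γ(α_1) ⋆ Γ(α_2). -/
/-- `F` is a face of the simplicial complex `Γ(α)`: `Γ(α)` is generated by the supports of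
the monomials (here: exponent functions `c` on the edge variables) in the fibre of the
monomial `α` under the map `π(e) = x_a x_b` for an edge `e = {x_a, x_b}` of `G`. -/
def IsGammaFace {V : Type} [Fintype V] [DecidableEq V] (G : SimpleGraph V)
    [DecidableRel G.Adj] (α : V → ℕ) (F : Set (Sym2 V)) : Prop :=
  ∃ c : Sym2 V → ℕ,
    (∀ e, c e ≠ 0 → e ∈ G.edgeSet) ∧
    (∀ v, (∑ e ∈ G.edgeFinset, if v ∈ e then c e else 0) = α v) ∧
    F ⊆ {e | c e ≠ 0}

/-- if `α = α₁ α₂` with `gcd(α₁, α₂) = 1` (i.e. disjoint supports) and the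
induced subgraph of `G` on `supp(α)` is the disjoint union of the induced subgraphs on
`supp(α₁)` and `supp(α₂)`, then `Γ(α) = Γ(α₁) ⋆ Γ(α₂)`: the faces of `Γ(α)` are exactly
the unions of a face of `Γ(α₁)` and a face of `Γ(α₂)`. -/
theorem stmt0 {V : Type} [Fintype V] [DecidableEq V] (G : SimpleGraph V)
    [DecidableRel G.Adj] (α α₁ α₂ : V → ℕ)
    (hprod : ∀ v, α v = α₁ v + α₂ v)
    (hgcd : ∀ v, α₁ v = 0 ∨ α₂ v = 0)
    (hind : ∀ e ∈ G.edgeSet, (∀ v ∈ e, α v ≠ 0) →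
      ((∀ v ∈ e, α₁ v ≠ 0) ∨ (∀ v ∈ e, α₂ v ≠ 0))) :
    ∀ F : Set (Sym2 V), IsGammaFace G α F ↔
      ∃ F₁ F₂ : Set (Sym2 V), IsGammaFace G α₁ F₁ ∧ IsGammaFace G α₂ F₂ ∧ F = F₁ ∪ F₂ := by
  classical
  intro F
  constructor
  · rintro ⟨c, hce, hsum, hF⟩
    have hsupp : ∀ e, c e ≠ 0 → ∀ v ∈ e, α v ≠ 0 := by
      intro e he v hv hav
      have h0 := hsum v
      rw [hav, Finset.sum_eq_zero_iff] at h0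
      have hmem : e ∈ G.edgeFinset := SimpleGraph.mem_edgeFinset.mpr (hce e he)
      have := h0 e hmem
      rw [if_pos hv] at this
      exact he this
    set c₁ : Sym2 V → ℕ := fun e => if (∀ v ∈ e, α₁ v ≠ 0) then c e else 0 with hc1
    set c₂ : Sym2 V → ℕ := fun e => if (∀ v ∈ e, α₂ v ≠ 0) then c e else 0 with hc2
    have hnotboth : ∀ e : Sym2 V, ¬((∀ v ∈ e, α₁ v ≠ 0) ∧ (∀ v ∈ e, α₂ v ≠ 0)) := by
      rintro e ⟨h1, h2⟩
      obtain ⟨⟨a, b⟩, rfl⟩ := e.exists_rep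
      have ha1 := h1 a (Sym2.mem_mk_left a b)
      have ha2 := h2 a (Sym2.mem_mk_left a b)
      rcases hgcd a with h | h
      · exact ha1 h
      · exact ha2 h
    have hadd : ∀ e, c₁ e + c₂ e = c e := by
      intro e
      by_cases hc : c e = 0
      · simp [hc1, hc2, hc]
      · rcases hind e (hce e hc) (hsupp e hc) with h | h
        · have h2 : ¬(∀ v ∈ e, α₂ v ≠ 0) := fun h2 => hnotboth e ⟨h, h2⟩
          show (if _ then _ else _) + (if _ then _ else _) = c e
          rw [if_pos h, if_neg h2, add_zero]
        · have h1 : ¬(∀ v ∈ e, α₁ v ≠ 0) := fun h1 => hnotboth e ⟨h1, h⟩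
          show (if _ then _ else _) + (if _ then _ else _) = c e
          rw [if_pos h, if_neg h1, zero_add]
    have hzero1 : ∀ v, α₁ v = 0 → (∑ e ∈ G.edgeFinset, if v ∈ e then c₁ e else 0) = 0 := by
      intro v hv
      apply Finset.sum_eq_zero
      intro e _
      by_cases hve : v ∈ e
      · rw [if_pos hve]
        by_cases h : ∀ w ∈ e, α₁ w ≠ 0
        · exact absurd hv (h v hve)
        · simp [hc1, h]
      · rw [if_neg hve]
    have hzero2 : ∀ v, α₂ v = 0 → (∑ e ∈ G.edgeFinset, if v ∈ e then c₂ e else 0) = 0 := by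
      intro v hv
      apply Finset.sum_eq_zero
      intro e _
      by_cases hve : v ∈ e
      · rw [if_pos hve]
        by_cases h : ∀ w ∈ e, α₂ w ≠ 0
        · exact absurd hv (h v hve)
        · simp [hc2, h]
      · rw [if_neg hve]
    have hsplit : ∀ v, (∑ e ∈ G.edgeFinset, if v ∈ e then c₁ e else 0)
        + (∑ e ∈ G.edgeFinset, if v ∈ e then c₂ e else 0) = α₁ v + α₂ v := by
      intro v
      rw [← Finset.sum_add_distrib, ← hprod v, ← hsum v]
      apply Finset.sum_congr rfl
      intro e _
      by_cases hve : v ∈ e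
      · simp [hve, hadd e]
      · simp [hve]
    have hsum1 : ∀ v, (∑ e ∈ G.edgeFinset, if v ∈ e then c₁ e else 0) = α₁ v := by
      intro v
      rcases hgcd v with h | h
      · rw [h, hzero1 v h]
      · have := hsplit v
        rw [h, hzero2 v h, add_zero, add_zero] at this
        exact this
    have hsum2 : ∀ v, (∑ e ∈ G.edgeFinset, if v ∈ e then c₂ e else 0) = α₂ v := by
      intro v
      rcases hgcd v with h | h
      · have := hsplit v
        rw [h, hzero1 v h, zero_add, zero_add] at this
        exact this
      · rw [h, hzero2 v h]
    have hc1e : ∀ e, c₁ e ≠ 0 → c e ≠ 0 := by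
      intro e he
      simp only [hc1] at he
      by_cases h : ∀ v ∈ e, α₁ v ≠ 0
      · rwa [if_pos h] at he
      · rw [if_neg h] at he; exact absurd rfl he
    have hc2e : ∀ e, c₂ e ≠ 0 → c e ≠ 0 := by
      intro e he
      simp only [hc2] at he
      by_cases h : ∀ v ∈ e, α₂ v ≠ 0
      · rwa [if_pos h] at he
      · rw [if_neg h] at he; exact absurd rfl he
    refine ⟨F ∩ {e | c₁ e ≠ 0}, F ∩ {e | c₂ e ≠ 0},
      ⟨c₁, fun e he => hce e (hc1e e he), hsum1, fun e he => he.2⟩,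
      ⟨c₂, fun e he => hce e (hc2e e he), hsum2, fun e he => he.2⟩, ?_⟩
    ext e
    constructor
    · intro he
      have hc : c e ≠ 0 := hF he
      have : c₁ e ≠ 0 ∨ c₂ e ≠ 0 := by
        by_contra hcon
        push_neg at hcon
        have := hadd e
        rw [hcon.1, hcon.2] at this
        exact hc this.symm
      rcases this with h | h
      · exact Or.inl ⟨he, h⟩
      · exact Or.inr ⟨he, h⟩
    · rintro (⟨he, _⟩ | ⟨he, _⟩) <;> exact he
  · rintro ⟨F₁, F₂, ⟨c₁, hce1, hsum1, hF1⟩, ⟨c₂, hce2, hsum2, hF2⟩, rfl⟩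
    refine ⟨fun e => c₁ e + c₂ e, ?_, ?_, ?_⟩
    · intro e he
      simp only [ne_eq] at he
      by_cases h1 : c₁ e = 0
      · exact hce2 e (fun h2 => he (by rw [h1, h2]))
      · exact hce1 e h1
    · intro v
      rw [hprod v, ← hsum1 v, ← hsum2 v, ← Finset.sum_add_distrib]
      apply Finset.sum_congr rfl
      intro e _
      by_cases hve : v ∈ e <;> simp [hve]
    · rintro e (he | he)
      · have := hF1 he
        simp only [Set.mem_setOf_eq] at this ⊢
        omega
      · have := hF2 he
        simp only [Set.mem_setOf_eq] at this ⊢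
        omega
end

section
/- Let G = K_{n,n} (n ≥ 2) be the complete bipartite graph with parts {x_1,...,x_n}, {y_1,...,y_n} and edges e_{i,j} = {x_i, y_j}, and let α = (x_1⋯x_n y_1⋯y_n)^{n-1}. Then the Stanley–Reisner ideal of Γ(α) in k[e_{i,j}] is generated by the n monomials e_{i,1}e_{i,2}⋯e_{i,n} for i = 1,...,n together with the n monomials e_{1,j}e_{2,j}⋯e_{n,j} for j = 1,...,n. Equivalently, the minimal non-faces of Γ(α) are exactly the rows and columns of the edge set: {e_{i,1},...,e_{i,n}} for each i and {e_{1,j},...,e_{n,j}} for each j. -/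
/-!
A set `F` of cells of the `n × n` grid is a face exactly when it contains no full row and no full
column. A full row in the support of `c` forces that row sum to be at least `n > n - 1`.
Conversely, the indicator of such an `F` has all line sums at most `n - 1`, and it can be topped
up to line sums exactly `n - 1` by a transportation matrix, which exists because the row deficits
and the column deficits have the same total. So the minimal non-faces are the rows and the
columns, and every non-face monomial is a multiple of a row or a column product.
-/

open MvPolynomial

/-- `F` is a face of `Γ(α)` for `α = (x_1⋯x_n y_1⋯y_n)^{n-1}` and `G = K_{n,n}`:
there is an exponent function `c` on the edges (= cells of the `n×n` grid) with all row
and column sums equal to `n-1` whose support contains `F`. -/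
def IsKnnFace (n : ℕ) (F : Finset (Fin n × Fin n)) : Prop :=
  ∃ c : Fin n × Fin n → ℕ,
    (∀ i, ∑ j, c (i, j) = n - 1) ∧ (∀ j, ∑ i, c (i, j) = n - 1) ∧ (∀ p ∈ F, c p ≠ 0)

/-- The Stanley–Reisner ideal of `Γ(α)`: generated by the squarefree monomials
corresponding to the non-faces of `Γ(α)`. -/
noncomputable def srIdeal (k : Type) [Field k] (n : ℕ) : Ideal (MvPolynomial (Fin n × Fin n) k) :=
  Ideal.span {m | ∃ F : Finset (Fin n × Fin n), ¬ IsKnnFace n F ∧ m = ∏ p ∈ F, X p}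

open Finset

theorem exists_nat_sum_row_col_eq {ι κ : Type*} [Fintype ι] [Fintype κ] [DecidableEq ι]
    [DecidableEq κ] (d : ι → ℕ) (e : κ → ℕ) (h : ∑ i, d i = ∑ j, e j) :
    ∃ M : ι × κ → ℕ, (∀ i, ∑ j, M (i, j) = d i) ∧ ∀ j, ∑ i, M (i, j) = e j := by
  induction hN : ∑ i, d i generalizing d e with
  | zero =>
    refine ⟨0, fun i => ?_, fun j => ?_⟩
    · simpa using ((sum_eq_zero_iff.1 hN) i (mem_univ i)).symm
    · simpa using ((sum_eq_zero_iff.1 (h ▸ hN)) j (mem_univ j)).symm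
  | succ N ih =>
    -- peel one unit off a cell whose row and column margins are both positive
    obtain ⟨i₀, -, hi₀⟩ := exists_ne_zero_of_sum_ne_zero (hN.trans_ne N.succ_ne_zero)
    obtain ⟨j₀, -, hj₀⟩ :=
      exists_ne_zero_of_sum_ne_zero ((h.symm.trans hN).trans_ne N.succ_ne_zero)
    set δ : ι → ℕ := Pi.single i₀ 1
    set ε : κ → ℕ := Pi.single j₀ 1
    have hδ : ∀ i, δ i ≤ d i := fun i => by
      by_cases hi : i = i₀ <;> simp [δ, hi]; omega
    have hε : ∀ j, ε j ≤ e j := fun j => by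
      by_cases hj : j = j₀ <;> simp [ε, hj]; omega
    have hδε : ∀ i j, (Pi.single (i₀, j₀) 1 : ι × κ → ℕ) (i, j) = δ i * ε j := fun i j => by
      by_cases hi : i = i₀ <;> by_cases hj : j = j₀ <;> simp [δ, ε, hi, hj]
    obtain ⟨M, hMr, hMc⟩ := ih (d - δ) (e - ε)
      (by simp only [Pi.sub_apply, sum_tsub_distrib _ fun i _ => hδ i,
        sum_tsub_distrib _ fun j _ => hε j, h, δ, ε, Fintype.sum_pi_single'])
      (by simp only [Pi.sub_apply, sum_tsub_distrib _ fun i _ => hδ i, hN, δ,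
        Fintype.sum_pi_single', Nat.add_sub_cancel])
    refine ⟨M + Pi.single (i₀, j₀) 1, fun i => ?_, fun j => ?_⟩
    · rw [Pi.add_def, sum_add_distrib, hMr]
      simp only [hδε, ← mul_sum, ε, Fintype.sum_pi_single', mul_one, Pi.sub_apply,
        tsub_add_cancel_of_le (hδ i)]
    · rw [Pi.add_def, sum_add_distrib, hMc]
      simp only [hδε, ← sum_mul, δ, Fintype.sum_pi_single', one_mul, Pi.sub_apply,
        tsub_add_cancel_of_le (hε j)]

theorem Ideal.span_prod_eq_of_forall_exists_subset {σ R : Type*} [CommSemiring R] (g : σ → R)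
    {S T : Set (Finset σ)} (hTS : T ⊆ S) (hST : ∀ F ∈ S, ∃ G ∈ T, G ⊆ F) :
    Ideal.span {m | ∃ F ∈ S, m = ∏ p ∈ F, g p} = Ideal.span {m | ∃ G ∈ T, m = ∏ p ∈ G, g p} := by
  classical
  refine le_antisymm (Ideal.span_le.2 ?_) (Ideal.span_mono fun m ⟨G, hG, hm⟩ => ⟨G, hTS hG, hm⟩)
  rintro _ ⟨F, hF, rfl⟩
  obtain ⟨G, hG, hGF⟩ := hST F hF
  rw [← prod_sdiff hGF]
  exact Ideal.mul_mem_left _ _ (Ideal.subset_span ⟨G, hG, rfl⟩)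

theorem exists_le_nat_sum_row_col_eq {ι : Type*} [Fintype ι] [DecidableEq ι] (a : ι × ι → ℕ)
    (N : ℕ) (hrow : ∀ i, ∑ j, a (i, j) ≤ N) (hcol : ∀ j, ∑ i, a (i, j) ≤ N) :
    ∃ c : ι × ι → ℕ, a ≤ c ∧ (∀ i, ∑ j, c (i, j) = N) ∧ ∀ j, ∑ i, c (i, j) = N := by
  obtain ⟨M, hMr, hMc⟩ := exists_nat_sum_row_col_eq (fun i => N - ∑ j, a (i, j))
    (fun j => N - ∑ i, a (i, j)) (by
      rw [sum_tsub_distrib _ fun i _ => hrow i, sum_tsub_distrib _ fun j _ => hcol j, sum_comm])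
  refine ⟨a + M, le_self_add, fun i => ?_, fun j => ?_⟩
  · rw [Pi.add_def, sum_add_distrib, hMr, add_tsub_cancel_of_le (hrow i)]
  · rw [Pi.add_def, sum_add_distrib, hMc, add_tsub_cancel_of_le (hcol j)]

theorem isKnnFace_iff {n : ℕ} {F : Finset (Fin n × Fin n)} :
    IsKnnFace n F ↔ (∀ i, ∃ j, (i, j) ∉ F) ∧ ∀ j, ∃ i, (i, j) ∉ F := by
  constructor
  · rintro ⟨c, hrow, hcol, hF⟩
    have hline : ∀ f : Fin n → ℕ, (∀ k, f k ≠ 0) → Fin n → ∑ k, f k ≠ n - 1 := by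
      intro f hf k₀ hsum
      have := card_nsmul_le_sum univ f 1 fun k _ => Nat.one_le_iff_ne_zero.2 (hf k)
      simp only [card_univ, Fintype.card_fin, smul_eq_mul, mul_one, hsum] at this
      have := k₀.pos
      omega
    refine ⟨fun i => ?_, fun j => ?_⟩ <;> by_contra! h
    · exact hline _ (fun j => hF _ (h j)) i (hrow i)
    · exact hline _ (fun i => hF _ (h i)) j (hcol j)
  · rintro ⟨hrow, hcol⟩
    have hcard : ∀ s : Finset (Fin n), ∀ x ∉ s, #s ≤ n - 1 := fun s x hx =>
      Nat.le_sub_one_of_lt (by simpa using card_lt_univ_of_notMem hx)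
    obtain ⟨c, hle, hcr, hcc⟩ :=
      exists_le_nat_sum_row_col_eq (fun p => if p ∈ F then 1 else 0) (n - 1)
      (fun i => by
        obtain ⟨j, hj⟩ := hrow i
        simpa using hcard _ j (by simpa using hj))
      (fun j => by
        obtain ⟨i, hi⟩ := hcol j
        simpa using hcard _ i (by simpa using hi))
    exact ⟨c, hcr, hcc, fun p hp => Nat.one_le_iff_ne_zero.1 (by simpa [hp] using hle p)⟩

def gridRow (n : ℕ) (i : Fin n) : Finset (Fin n × Fin n) := univ.filter fun p => p.1 = i

def gridCol (n : ℕ) (j : Fin n) : Finset (Fin n × Fin n) := univ.filter fun p => p.2 = j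

section Grid

variable {n : ℕ} {F : Finset (Fin n × Fin n)}

@[simp]
theorem mem_gridRow {i : Fin n} {p : Fin n × Fin n} : p ∈ gridRow n i ↔ p.1 = i := by
  simp [gridRow]

@[simp]
theorem mem_gridCol {j : Fin n} {p : Fin n × Fin n} : p ∈ gridCol n j ↔ p.2 = j := by
  simp [gridCol]

theorem gridRow_subset_iff {i : Fin n} : gridRow n i ⊆ F ↔ ∀ j, (i, j) ∈ F :=
  ⟨fun h j => h (mem_gridRow.2 rfl), fun h ⟨i', j⟩ hp => by
    obtain rfl : i' = i := mem_gridRow.1 hp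
    exact h j⟩

theorem gridCol_subset_iff {j : Fin n} : gridCol n j ⊆ F ↔ ∀ i, (i, j) ∈ F :=
  ⟨fun h i => h (mem_gridCol.2 rfl), fun h ⟨i, j'⟩ hp => by
    obtain rfl : j' = j := mem_gridCol.1 hp
    exact h i⟩

theorem not_isKnnFace_iff :
    ¬ IsKnnFace n F ↔ (∃ i, gridRow n i ⊆ F) ∨ ∃ j, gridCol n j ⊆ F := by
  simp only [isKnnFace_iff, gridRow_subset_iff, gridCol_subset_iff, not_and_or, not_forall,
    not_exists, not_not]

theorem not_isKnnFace_gridRow (i : Fin n) : ¬ IsKnnFace n (gridRow n i) :=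
  not_isKnnFace_iff.2 (.inl ⟨i, subset_rfl⟩)

theorem not_isKnnFace_gridCol (j : Fin n) : ¬ IsKnnFace n (gridCol n j) :=
  not_isKnnFace_iff.2 (.inr ⟨j, subset_rfl⟩)

theorem isKnnFace_of_ssubset_gridRow {i : Fin n} (hF : F ⊂ gridRow n i) : IsKnnFace n F := by
  obtain ⟨⟨i₀, j₀⟩, hrow, hF₀⟩ := exists_of_ssubset hF
  obtain rfl : i₀ = i := mem_gridRow.1 hrow
  refine isKnnFace_iff.2 ⟨fun i' => ⟨j₀, fun h => ?_⟩, fun j => ?_⟩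
  · obtain rfl : i' = i₀ := mem_gridRow.1 (hF.subset h)
    exact hF₀ h
  · by_cases hj : j = j₀
    · exact ⟨i₀, hj ▸ hF₀⟩
    · have : Nontrivial (Fin n) := ⟨⟨j, j₀, hj⟩⟩
      obtain ⟨i', hi'⟩ := exists_ne i₀
      exact ⟨i', fun h => hi' (mem_gridRow.1 (hF.subset h))⟩

theorem isKnnFace_of_ssubset_gridCol {j : Fin n} (hF : F ⊂ gridCol n j) : IsKnnFace n F := by
  obtain ⟨⟨i₀, j₀⟩, hcol, hF₀⟩ := exists_of_ssubset hF
  obtain rfl : j₀ = j := mem_gridCol.1 hcol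
  refine isKnnFace_iff.2 ⟨fun i => ?_, fun j' => ⟨i₀, fun h => ?_⟩⟩
  · by_cases hi : i = i₀
    · exact ⟨j₀, hi ▸ hF₀⟩
    · have : Nontrivial (Fin n) := ⟨⟨i, i₀, hi⟩⟩
      obtain ⟨j', hj'⟩ := exists_ne j₀
      exact ⟨j', fun h => hj' (mem_gridCol.1 (hF.subset h))⟩
  · obtain rfl : j' = j₀ := mem_gridCol.1 (hF.subset h)
    exact hF₀ h

theorem prod_gridRow {M : Type*} [CommMonoid M] (f : Fin n × Fin n → M) (i : Fin n) :
    ∏ p ∈ gridRow n i, f p = ∏ j, f (i, j) := by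
  simp [gridRow, prod_filter, Fintype.prod_prod_type_right]

theorem prod_gridCol {M : Type*} [CommMonoid M] (f : Fin n × Fin n → M) (j : Fin n) :
    ∏ p ∈ gridCol n j, f p = ∏ i, f (i, j) := by
  simp [gridCol, prod_filter, Fintype.prod_prod_type]

end Grid

theorem stmt1_general (k : Type) [Field k] (n : ℕ) :
    srIdeal k n =
      Ideal.span ({m | ∃ i, m = ∏ j, X (i, j)} ∪ {m | ∃ j, m = ∏ i, X (i, j)} :
        Set (MvPolynomial (Fin n × Fin n) k)) ∧
    (∀ F : Finset (Fin n × Fin n),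
      (¬ IsKnnFace n F ∧ ∀ F' ⊂ F, IsKnnFace n F') ↔
        ((∃ i, F = Finset.univ.filter (fun p => p.1 = i)) ∨
         (∃ j, F = Finset.univ.filter (fun p => p.2 = j)))) := by
  refine ⟨?_, fun F => ⟨?_, ?_⟩⟩
  · have hlines : Set.range (gridRow n) ∪ Set.range (gridCol n) ⊆ {F | ¬ IsKnnFace n F} := by
      rintro _ (⟨i, rfl⟩ | ⟨j, rfl⟩)
      exacts [not_isKnnFace_gridRow i, not_isKnnFace_gridCol j]
    refine (Ideal.span_prod_eq_of_forall_exists_subset X hlines fun F hF => ?_).trans ?_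
    · rcases not_isKnnFace_iff.1 hF with ⟨i, hi⟩ | ⟨j, hj⟩
      exacts [⟨_, .inl ⟨i, rfl⟩, hi⟩, ⟨_, .inr ⟨j, rfl⟩, hj⟩]
    · congr 1
      ext m
      simp only [Set.mem_union, Set.mem_range, Set.mem_ofPred_eq, or_and_right, exists_or,
        exists_exists_eq_and, prod_gridRow, prod_gridCol]
  · rintro ⟨hF, hmin⟩
    rcases not_isKnnFace_iff.1 hF with ⟨i, hi⟩ | ⟨j, hj⟩
    · exact .inl ⟨i, of_not_not fun hne =>
        not_isKnnFace_gridRow i (hmin _ (hi.ssubset_of_ne (Ne.symm hne)))⟩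
    · exact .inr ⟨j, of_not_not fun hne =>
        not_isKnnFace_gridCol j (hmin _ (hj.ssubset_of_ne (Ne.symm hne)))⟩
  · rintro (⟨i, rfl⟩ | ⟨j, rfl⟩)
    exacts [⟨not_isKnnFace_gridRow i, fun _ => isKnnFace_of_ssubset_gridRow⟩,
      ⟨not_isKnnFace_gridCol j, fun _ => isKnnFace_of_ssubset_gridCol⟩]

/-- for `G = K_{n,n}` (`n ≥ 2`) and `α = (x_1⋯x_n y_1⋯y_n)^{n-1}`, the
Stanley–Reisner ideal of `Γ(α)` is generated by the `n` row products
`e_{i,1}⋯e_{i,n}` and the `n` column products `e_{1,j}⋯e_{n,j}`.  Equivalently, the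
minimal non-faces of `Γ(α)` are exactly the rows and the columns of the grid. -/
theorem stmt1 (k : Type) [Field k] (n : ℕ) (hn : 2 ≤ n) :
    srIdeal k n =
      Ideal.span ({m | ∃ i, m = ∏ j, X (i, j)} ∪ {m | ∃ j, m = ∏ i, X (i, j)} :
        Set (MvPolynomial (Fin n × Fin n) k)) ∧
    (∀ F : Finset (Fin n × Fin n),
      (¬ IsKnnFace n F ∧ ∀ F' ⊂ F, IsKnnFace n F') ↔
        ((∃ i, F = Finset.univ.filter (fun p => p.1 = i)) ∨
         (∃ j, F = Finset.univ.filter (fun p => p.2 = j)))) :=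
  stmt1_general k n
end

section
/- Equivalent combinatorial form of the Stanley–Reisner description: a set F of cells of the n×n grid (n ≥ 2) is a face of Γ(α) (with α = (x_1⋯x_n y_1⋯y_n)^{n-1}) if and only if F does not contain an entire row and does not contain an entire column of the grid. Concretely: there exists a function w : {1,...,n}² → ℕ supported on F with all row sums and all column sums equal to n−1, if and only if F contains no full row and no full column. -/
/-- Transportation lemma: any two nonnegative integer vectors with equal total sums
are the row/column margins of some nonnegative integer matrix. -/
lemma transport (n : ℕ) : ∀ N (ρ κ : Fin n → ℕ), ∑ i, ρ i = N → ∑ j, κ j = N →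
    ∃ s : Fin n × Fin n → ℕ,
      (∀ i, ∑ j, s (i, j) = ρ i) ∧ (∀ j, ∑ i, s (i, j) = κ j) := by
  intro N
  induction N with
  | zero =>
    intro ρ κ hρ hκ
    refine ⟨0, fun i => ?_, fun j => ?_⟩ <;> simp
    · exact (Finset.sum_eq_zero_iff.mp hρ _ (Finset.mem_univ _)).symm
    · exact (Finset.sum_eq_zero_iff.mp hκ _ (Finset.mem_univ _)).symm
  | succ N ih =>
    intro ρ κ hρ hκ
    obtain ⟨i0, -, hi0⟩ := Finset.exists_ne_zero_of_sum_ne_zero (by omega : ∑ i, ρ i ≠ 0)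
    obtain ⟨j0, -, hj0⟩ := Finset.exists_ne_zero_of_sum_ne_zero (by omega : ∑ j, κ j ≠ 0)
    have hρsplit : ∑ i, ρ i = ρ i0 + ∑ i ∈ Finset.univ.erase i0, ρ i :=
      (Finset.add_sum_erase _ _ (Finset.mem_univ i0)).symm
    have hκsplit : ∑ j, κ j = κ j0 + ∑ j ∈ Finset.univ.erase j0, κ j :=
      (Finset.add_sum_erase _ _ (Finset.mem_univ j0)).symm
    have hρ' : ∑ i, Function.update ρ i0 (ρ i0 - 1) i = N := by
      rw [Finset.sum_update_of_mem (Finset.mem_univ i0)]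
      have : Finset.univ \ {i0} = Finset.univ.erase i0 := by
        rw [Finset.erase_eq]
      rw [this]; omega
    have hκ' : ∑ j, Function.update κ j0 (κ j0 - 1) j = N := by
      rw [Finset.sum_update_of_mem (Finset.mem_univ j0)]
      have : Finset.univ \ {j0} = Finset.univ.erase j0 := by
        rw [Finset.erase_eq]
      rw [this]; omega
    obtain ⟨s, hr, hc⟩ := ih _ _ hρ' hκ'
    refine ⟨fun p => s p + if p = (i0, j0) then 1 else 0, fun i => ?_, fun j => ?_⟩
    · rw [Finset.sum_add_distrib, hr]
      by_cases hi : i = i0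
      · subst hi
        simp only [Prod.mk.injEq, true_and, Function.update_self]
        rw [Finset.sum_ite_eq' Finset.univ j0 (fun _ => 1)]
        simp; omega
      · simp only [Prod.mk.injEq, hi, false_and, if_false, Finset.sum_const_zero,
          add_zero, Function.update_of_ne hi]
    · rw [Finset.sum_add_distrib, hc]
      by_cases hj : j = j0
      · subst hj
        simp only [Prod.mk.injEq, and_true, Function.update_self]
        rw [Finset.sum_ite_eq' Finset.univ i0 (fun _ => 1)]
        simp; omega
      · simp only [Prod.mk.injEq, hj, and_false, if_false, Finset.sum_const_zero,
          add_zero, Function.update_of_ne hj]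

/-- identify the edges of `K_{n,n}` with the cells of the `n×n` grid, and let
`α = (x_1⋯x_n y_1⋯y_n)^{n-1}` (`n ≥ 2`).  A set `F` of cells is a face of `Γ(α)` — i.e.
there is an exponent function `c : {1,…,n}² → ℕ` with all row sums and all column sums
equal to `n−1` whose support contains `F` — if and only if `F` contains no full row and
no full column of the grid. -/
theorem stmt2 (n : ℕ) (hn : 2 ≤ n) (F : Finset (Fin n × Fin n)) :
    (∃ c : Fin n × Fin n → ℕ,
        (∀ i, ∑ j, c (i, j) = n - 1) ∧
        (∀ j, ∑ i, c (i, j) = n - 1) ∧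
        (∀ p ∈ F, c p ≠ 0)) ↔
      (¬ ∃ i, ∀ j, (i, j) ∈ F) ∧ (¬ ∃ j, ∀ i, (i, j) ∈ F) := by
  constructor
  · rintro ⟨c, hr, hc, hs⟩
    constructor
    · rintro ⟨i0, hi0⟩
      have h1 : ∀ j ∈ Finset.univ, 1 ≤ c (i0, j) :=
        fun j _ => Nat.one_le_iff_ne_zero.mpr (hs _ (hi0 j))
      have h2 := Finset.card_nsmul_le_sum Finset.univ (fun j => c (i0, j)) 1 h1
      simp only [Finset.card_univ, Fintype.card_fin, smul_eq_mul, mul_one] at h2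
      rw [hr i0] at h2; omega
    · rintro ⟨j0, hj0⟩
      have h1 : ∀ i ∈ Finset.univ, 1 ≤ c (i, j0) :=
        fun i _ => Nat.one_le_iff_ne_zero.mpr (hs _ (hj0 i))
      have h2 := Finset.card_nsmul_le_sum Finset.univ (fun i => c (i, j0)) 1 h1
      simp only [Finset.card_univ, Fintype.card_fin, smul_eq_mul, mul_one] at h2
      rw [hc j0] at h2; omega
  · rintro ⟨hrow, hcol⟩
    push_neg at hrow hcol
    set a : Fin n → ℕ := fun i => ∑ j, if (i, j) ∈ F then 1 else 0 with ha_def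
    set b : Fin n → ℕ := fun j => ∑ i, if (i, j) ∈ F then 1 else 0 with hb_def
    have ha : ∀ i, a i ≤ n - 1 := by
      intro i
      obtain ⟨j0, hj0⟩ := hrow i
      have hsplit : a i = (if (i, j0) ∈ F then 1 else 0)
          + ∑ j ∈ Finset.univ.erase j0, (if (i, j) ∈ F then 1 else 0) :=
        (Finset.add_sum_erase _ _ (Finset.mem_univ j0)).symm
      have hb1 : ∑ j ∈ Finset.univ.erase j0, (if (i, j) ∈ F then 1 else 0)
          ≤ (Finset.univ.erase j0).card • 1 :=
        Finset.sum_le_card_nsmul _ _ 1 (fun j _ => by split <;> omega)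
      rw [Finset.card_erase_of_mem (Finset.mem_univ j0)] at hb1
      simp only [Finset.card_univ, Fintype.card_fin, smul_eq_mul, mul_one] at hb1
      rw [if_neg hj0] at hsplit
      omega
    have hb : ∀ j, b j ≤ n - 1 := by
      intro j
      obtain ⟨i0, hi0⟩ := hcol j
      have hsplit : b j = (if (i0, j) ∈ F then 1 else 0)
          + ∑ i ∈ Finset.univ.erase i0, (if (i, j) ∈ F then 1 else 0) :=
        (Finset.add_sum_erase _ _ (Finset.mem_univ i0)).symm
      have hb1 : ∑ i ∈ Finset.univ.erase i0, (if (i, j) ∈ F then 1 else 0)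
          ≤ (Finset.univ.erase i0).card • 1 :=
        Finset.sum_le_card_nsmul _ _ 1 (fun i _ => by split <;> omega)
      rw [Finset.card_erase_of_mem (Finset.mem_univ i0)] at hb1
      simp only [Finset.card_univ, Fintype.card_fin, smul_eq_mul, mul_one] at hb1
      rw [if_neg hi0] at hsplit
      omega
    have hab : ∑ i, a i = ∑ j, b j := Finset.sum_comm
    have hsa : ∑ i, ((n - 1 - a i) + a i) = n * (n - 1) := by
      rw [Finset.sum_congr rfl (fun i _ => Nat.sub_add_cancel (ha i))]
      simp [mul_comm]
    have hsb : ∑ j, ((n - 1 - b j) + b j) = n * (n - 1) := by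
      rw [Finset.sum_congr rfl (fun j _ => Nat.sub_add_cancel (hb j))]
      simp [mul_comm]
    rw [Finset.sum_add_distrib] at hsa hsb
    have hk : ∑ j, (n - 1 - b j) = ∑ i, (n - 1 - a i) := by omega
    obtain ⟨s, hsr, hsc⟩ := transport n (∑ i, (n - 1 - a i))
      (fun i => n - 1 - a i) (fun j => n - 1 - b j) rfl hk
    refine ⟨fun p => (if p ∈ F then 1 else 0) + s p, fun i => ?_, fun j => ?_, fun p hp => ?_⟩
    · rw [Finset.sum_add_distrib, hsr]
      have : ∑ j, (if (i, j) ∈ F then 1 else 0) = a i := rfl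
      have h2 := ha i
      rw [this]; omega
    · rw [Finset.sum_add_distrib, hsc]
      have : ∑ i, (if (i, j) ∈ F then 1 else 0) = b j := rfl
      have h2 := hb j
      rw [this]; omega
    · simp [hp]
end

section
/- Let G be a chordal bipartite graph (a bipartite graph with no induced cycle of length ≥ 6) with bipartition X ∪ Y, and let A_G be its biadjacency 0/1-matrix ordered as in Ohsugi–Hibi (rows and columns each sorted from largest to smallest in reverse lexicographic order). Then A_G has no 2×2 submatrix (with rows a < c and columns b < d) equal to [[1,1],[1,0]]; i.e., if (A_G)_{a,b} = (A_G)_{a,d} = (A_G)_{c,b} = 1 with a < c, b < d, then (A_G)_{c,d} = 1. -/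
/-- A bipartite graph, given by its biadjacency relation `A` (with `A i j` true iff
`{x_i, y_j}` is an edge), is chordal bipartite if every cycle of length at least 6 has a
chord.  A cycle of length `2p` (`p ≥ 3`) is given by distinct rows `x : ZMod p → Fin n`
and distinct columns `y : ZMod p → Fin m` with consecutive edges `(x i, y i)` and
`(x (i+1), y i)`; a chord is an edge `(x i, y j)` which is not one of the cycle edges
(i.e. `j ≠ i` and `i ≠ j + 1`). -/
def ChordalBipartite {n m : ℕ} (A : Fin n → Fin m → Prop) : Prop :=
  ∀ p : ℕ, 3 ≤ p → ∀ (x : ZMod p → Fin n) (y : ZMod p → Fin m),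
    Function.Injective x → Function.Injective y →
    (∀ i, A (x i) (y i)) → (∀ i, A (x (i + 1)) (y i)) →
    ∃ i j : ZMod p, A (x i) (y j) ∧ j ≠ i ∧ i ≠ j + 1


open Finset

lemma two_pow_filter_lt {K : ℕ} (E : ℕ) (hE : E ≤ K) :
    ∑ j ∈ univ.filter (fun j : Fin K => j.val < E), 2 ^ j.val < 2 ^ E := by
  induction E with
  | zero => simp
  | succ E ih =>
    have h1 : univ.filter (fun j : Fin K => j.val < E + 1)
        = insert (⟨E, by omega⟩ : Fin K) (univ.filter (fun j : Fin K => j.val < E)) := by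
      ext j
      simp only [mem_filter, mem_univ, true_and, mem_insert, Fin.ext_iff]
      omega
    rw [h1, sum_insert (by simp)]
    have h2 := ih (by omega)
    simp only [Fin.val_mk]
    rw [pow_succ]
    omega

lemma rowNum_lt {K : ℕ} (u v : Fin K → Prop) [DecidablePred u] [DecidablePred v]
    (e : Fin K) (hu : u e) (hv : ¬ v e) (ht : ∀ j, e < j → (v j ↔ u j)) :
    (∑ j, if v j then 2 ^ j.val else 0) < ∑ j, if u j then 2 ^ j.val else 0 := by
  rw [← sum_filter_add_sum_filter_not univ (fun j => e < j) (fun j => if v j then 2 ^ j.val else 0),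
      ← sum_filter_add_sum_filter_not univ (fun j => e < j) (fun j => if u j then 2 ^ j.val else 0)]
  have hhigh : ∑ j ∈ univ.filter (fun j => e < j), (if v j then 2 ^ j.val else 0)
      = ∑ j ∈ univ.filter (fun j => e < j), (if u j then 2 ^ j.val else 0) :=
    sum_congr rfl fun j hj => if_congr (ht j (by simpa using hj)) rfl rfl
  rw [hhigh]
  apply Nat.add_lt_add_left
  have hlow2 : (2:ℕ) ^ e.val ≤ ∑ j ∈ univ.filter (fun j : Fin K => ¬ e < j), (if u j then 2 ^ j.val else 0) := by
    have he : e ∈ univ.filter (fun j : Fin K => ¬ e < j) := by simp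
    calc (2:ℕ)^e.val = if u e then 2^e.val else 0 := by rw [if_pos hu]
    _ ≤ _ := single_le_sum (f := fun j : Fin K => if u j then 2 ^ j.val else 0)
          (fun i _ => Nat.zero_le _) he
  have hlow1 : ∑ j ∈ univ.filter (fun j : Fin K => ¬ e < j), (if v j then 2 ^ j.val else 0)
      < 2 ^ e.val := by
    calc ∑ j ∈ univ.filter (fun j : Fin K => ¬ e < j), (if v j then 2 ^ j.val else 0)
        ≤ ∑ j ∈ univ.filter (fun j : Fin K => j.val < e.val), (if v j then 2 ^ j.val else 0) := by
          apply sum_le_sum_of_ne_zero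
          intro j hj hne
          simp only [mem_filter, mem_univ, true_and] at hj ⊢
          have hvj : v j := by by_contra h; simp [h] at hne
          have h1 : j ≠ e := fun h => hv (h ▸ hvj)
          have h2 : j.val ≠ e.val := fun h => h1 (Fin.ext h)
          have h3 : j.val ≤ e.val := Fin.not_lt.mp hj
          omega
    _ ≤ ∑ j ∈ univ.filter (fun j : Fin K => j.val < e.val), 2 ^ j.val :=
          sum_le_sum (fun j _ => by split_ifs <;> simp)
    _ < 2 ^ e.val := two_pow_filter_lt e.val e.isLt.le
  omega

lemma sum_swap_pair {α : Type*} [Fintype α] [DecidableEq α] (f g : α → ℕ) (a c : α)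
    (hac : a ≠ c) (h : ∀ i, i ≠ a → i ≠ c → f i = g i) :
    ∑ i, f i + (g a + g c) = ∑ i, g i + (f a + f c) := by
  have hc : c ∈ univ.erase a := mem_erase.mpr ⟨fun hc => hac hc.symm, mem_univ c⟩
  have key : ∀ F : α → ℕ, ∑ i, F i = F a + (F c + ∑ i ∈ (univ.erase a).erase c, F i) := by
    intro F
    rw [← add_sum_erase _ F (mem_univ a)]
    congr 1
    rw [← add_sum_erase _ F hc]
  have hsum : ∑ i ∈ (univ.erase a).erase c, f i = ∑ i ∈ (univ.erase a).erase c, g i := by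
    apply sum_congr rfl
    intro i hi
    simp only [mem_erase] at hi
    exact h i hi.2.1 hi.1
  rw [key f, key g, hsum]; ring

/-- Row index of the `k`-th vertex when traversing the closed cycle. -/
def zig (t k : ℕ) : ℕ := if k = 0 then 0 else if 2*k ≤ t+1 then 2*k - 1 else 2*(t+1-k)

/-- Column index of the `k`-th vertex when traversing the closed cycle. -/
def zag (t k : ℕ) : ℕ := if 2*k ≤ t then 2*k else 2*(t+1-k) - 1

lemma zig_le (t k : ℕ) (hk : k ≤ t) : zig t k ≤ t := by
  unfold zig; split_ifs <;> (try exact (by assumption : False).elim) <;> omega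

lemma zag_le (t k : ℕ) (hk : k ≤ t) : zag t k ≤ t := by
  unfold zag; split_ifs <;> (try exact (by assumption : False).elim) <;> omega

lemma zig_inj (t k k' : ℕ) (hk : k ≤ t) (hk' : k' ≤ t) (h : zig t k = zig t k') : k = k' := by
  unfold zig at h; split_ifs at h <;> (try exact (by assumption : False).elim) <;> omega

lemma zag_inj (t k k' : ℕ) (hk : k ≤ t) (hk' : k' ≤ t) (h : zag t k = zag t k') : k = k' := by
  unfold zag at h; split_ifs at h <;> (try exact (by assumption : False).elim) <;> omega

lemma zig_zag_ed (t k : ℕ) (h2 : 2 ≤ t) (hk : k ≤ t) :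
    (zig t k = 0 ∧ zag t k = 0) ∨ (zig t k = t ∧ zag t k = t) ∨
      zag t k = zig t k + 1 ∨ zig t k = zag t k + 1 := by
  unfold zig zag; split_ifs <;> (try exact (by assumption : False).elim) <;> omega

lemma zig_zag_ed2 (t k : ℕ) (h2 : 2 ≤ t) (hk : k ≤ t) :
    (zig t ((k+1) % (t+1)) = 0 ∧ zag t k = 0) ∨ (zig t ((k+1) % (t+1)) = t ∧ zag t k = t) ∨
      zag t k = zig t ((k+1) % (t+1)) + 1 ∨ zig t ((k+1) % (t+1)) = zag t k + 1 := by
  by_cases hkt : k = t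
  · have h0 : (k+1) % (t+1) = 0 := by rw [hkt]; exact Nat.mod_self _
    rw [h0]
    unfold zig zag; split_ifs <;> (try exact (by assumption : False).elim) <;> omega
  · rw [show (k+1) % (t+1) = k+1 from Nat.mod_eq_of_lt (by omega)]
    unfold zig zag; split_ifs <;> (try exact (by assumption : False).elim) <;> omega

lemma zig_zag_back (t k k' : ℕ) (h2 : 2 ≤ t) (hk : k ≤ t) (hk' : k' ≤ t)
    (hE : (zig t k = 0 ∧ zag t k' = 0) ∨ (zig t k = t ∧ zag t k' = t) ∨
      zag t k' = zig t k + 1 ∨ zig t k = zag t k' + 1) :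
    k' = k ∨ (k = 0 ∧ k' = t) ∨ k = k' + 1 := by
  unfold zig zag at hE
  rcases hE with ⟨h1, h2⟩ | ⟨h1, h2⟩ | h1 | h1 <;> split_ifs at * <;> (try exact (by assumption : False).elim) <;> omega

lemma close_cycle {n m : ℕ} (χ : Fin n → Fin m → Prop) (hA : ChordalBipartite χ)
    (t : ℕ) (ht : 2 ≤ t) (r : ℕ → Fin n) (cs : ℕ → Fin m)
    (mr : ∀ k, k < t → r k < r (k+1)) (mc : ∀ k, k < t → cs k < cs (k+1))
    (o0 : χ (r 0) (cs 0))
    (o2 : ∀ k, k < t → χ (r k) (cs (k+1)))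
    (o3 : ∀ k, k < t → χ (r (k+1)) (cs k))
    (z1 : ∀ k, 0 < k → k < t → ¬χ (r k) (cs k))
    (z2 : ∀ k, k + 2 ≤ t → ¬χ (r k) (cs (k+2)))
    (z3 : ∀ k, k + 2 ≤ t → ¬χ (r (k+2)) (cs k))
    (t4 : ∀ k, k + 2 ≤ t → ∀ j, cs (k+2) < j → (χ (r k) j ↔ χ (r (k+1)) j))
    (t5 : ∀ k, k + 2 ≤ t → ∀ i, r (k+2) < i → (χ i (cs k) ↔ χ i (cs (k+1))))
    (hl : χ (r t) (cs t)) : False := by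
  -- extended monotonicity
  have rmono : ∀ u v, u < v → v ≤ t → r u < r v := by
    intro u v huv hv
    obtain ⟨e, rfl⟩ : ∃ e, v = u + e + 1 := ⟨v - u - 1, by omega⟩
    clear huv
    induction e with
    | zero => exact mr u (by omega)
    | succ e ih =>
      calc r u < r (u + e + 1) := ih (by omega)
      _ < r (u + e + 1 + 1) := mr (u + e + 1) (by omega)
  have cmono : ∀ u v, u < v → v ≤ t → cs u < cs v := by
    intro u v huv hv
    obtain ⟨e, rfl⟩ : ∃ e, v = u + e + 1 := ⟨v - u - 1, by omega⟩
    clear huv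
    induction e with
    | zero => exact mc u (by omega)
    | succ e ih =>
      calc cs u < cs (u + e + 1) := ih (by omega)
      _ < cs (u + e + 1 + 1) := mc (u + e + 1) (by omega)
  have rinj : ∀ u v, u ≤ t → v ≤ t → r u = r v → u = v := by
    intro u v hu hv h
    rcases lt_trichotomy u v with hlt | he | hlt
    · exact absurd (h ▸ rmono u v hlt hv) (lt_irrefl _)
    · exact he
    · exact absurd (h ▸ rmono v u hlt hu) (lt_irrefl _)
  -- far zeros
  have zrow : ∀ e u, u + 2 + e ≤ t → ¬ χ (r u) (cs (u + 2 + e)) := by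
    intro e
    induction e with
    | zero => intro u h; exact z2 u h
    | succ e ih =>
      intro u h
      have hiff := t4 u (by omega) (cs (u + 2 + e + 1))
        (cmono (u+2) (u+2+e+1) (by omega) (by omega))
      have h2 := ih (u+1) (by omega)
      have he : u + 1 + 2 + e = u + 2 + e + 1 := by omega
      rw [he] at h2
      intro hx
      exact h2 (hiff.mp hx)
  have zcol : ∀ e u, u + 2 + e ≤ t → ¬ χ (r (u + 2 + e)) (cs u) := by
    intro e
    induction e with
    | zero => intro u h; exact z3 u h
    | succ e ih =>
      intro u h
      have hiff := t5 u (by omega) (r (u + 2 + e + 1))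
        (rmono (u+2) (u+2+e+1) (by omega) (by omega))
      have h2 := ih (u+1) (by omega)
      have he : u + 1 + 2 + e = u + 2 + e + 1 := by omega
      rw [he] at h2
      intro hx
      exact h2 (hiff.mp hx)
  have nonedge : ∀ u v, u ≤ t → v ≤ t →
      ¬((u = 0 ∧ v = 0) ∨ (u = t ∧ v = t) ∨ v = u + 1 ∨ u = v + 1) →
      ¬ χ (r u) (cs v) := by
    intro u v hu hv hne
    push_neg at hne
    obtain ⟨hn1, hn2, hn3, hn4⟩ := hne
    rcases lt_trichotomy u v with h | h | h
    · obtain ⟨e, rfl⟩ : ∃ e, v = u + 2 + e := ⟨v - u - 2, by omega⟩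
      exact zrow e u hv
    · subst h
      exact z1 u (by omega) (by omega)
    · obtain ⟨e, rfl⟩ : ∃ e, u = v + 2 + e := ⟨u - v - 2, by omega⟩
      exact zcol e v hu
  have hone : ∀ u v, u ≤ t → v ≤ t →
      ((u = 0 ∧ v = 0) ∨ (u = t ∧ v = t) ∨ v = u + 1 ∨ u = v + 1) → χ (r u) (cs v) := by
    rintro u v hu hv (⟨rfl, rfl⟩ | ⟨rfl, rfl⟩ | rfl | rfl)
    · exact o0
    · exact hl
    · exact o2 u (by omega)
    · exact o3 v (by omega)
  -- build the cycle
  haveI : NeZero (t+1) := ⟨by omega⟩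
  haveI : Fact (1 < t + 1) := ⟨by omega⟩
  have hvle : ∀ i : ZMod (t+1), i.val ≤ t := fun i => by
    have := ZMod.val_lt i; omega
  have valinj : ∀ i i' : ZMod (t+1), i.val = i'.val → i = i' :=
    fun i i' h => Function.LeftInverse.injective (ZMod.natCast_rightInverse) h
  have hval1 : (1 : ZMod (t+1)).val = 1 := ZMod.val_one _
  have hxinj : Function.Injective (fun i : ZMod (t+1) => r (zig t i.val)) := by
    intro i i' hee
    simp only at hee
    apply valinj
    exact zig_inj t i.val i'.val (hvle i) (hvle i')
      (rinj _ _ (zig_le t _ (hvle i)) (zig_le t _ (hvle i')) hee)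
  have hyinj : Function.Injective (fun i : ZMod (t+1) => cs (zag t i.val)) := by
    intro i i' hee
    simp only at hee
    apply valinj
    refine zag_inj t i.val i'.val (hvle i) (hvle i') ?_
    by_contra hcon
    rcases Nat.lt_or_ge (zag t i.val) (zag t i'.val) with h | h
    · exact absurd (hee ▸ cmono _ _ h (zag_le t _ (hvle i'))) (lt_irrefl _)
    · rcases Nat.lt_or_ge (zag t i'.val) (zag t i.val) with h' | h'
      · exact absurd (hee ▸ cmono _ _ h' (zag_le t _ (hvle i))) (lt_irrefl _)
      · exact hcon (by omega)
  have h1 : ∀ i : ZMod (t+1), χ (r (zig t i.val)) (cs (zag t i.val)) := fun i =>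
    hone _ _ (zig_le t _ (hvle i)) (zag_le t _ (hvle i)) (zig_zag_ed t i.val ht (hvle i))
  have h2 : ∀ i : ZMod (t+1), χ (r (zig t (i+1).val)) (cs (zag t i.val)) := by
    intro i
    have hv : (i + 1 : ZMod (t+1)).val = (i.val + 1) % (t+1) := by
      rw [ZMod.val_add, hval1]
    rw [hv]
    refine hone _ _ (zig_le t _ ?_) (zag_le t _ (hvle i)) (zig_zag_ed2 t i.val ht (hvle i))
    have : (i.val + 1) % (t+1) < t + 1 := Nat.mod_lt _ (by omega)
    omega
  obtain ⟨i, j, hchord, hji, hij⟩ := hA (t+1) (by omega)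
    (fun i : ZMod (t+1) => r (zig t i.val)) (fun i : ZMod (t+1) => cs (zag t i.val))
    hxinj hyinj h1 h2
  have hEdge : (zig t i.val = 0 ∧ zag t j.val = 0) ∨ (zig t i.val = t ∧ zag t j.val = t) ∨
      zag t j.val = zig t i.val + 1 ∨ zig t i.val = zag t j.val + 1 := by
    by_contra hcon
    exact nonedge _ _ (zig_le t _ (hvle i)) (zag_le t _ (hvle j)) hcon hchord
  rcases zig_zag_back t i.val j.val ht (hvle i) (hvle j) hEdge with h | ⟨h0, hT⟩ | h
  · exact hji (valinj _ _ h)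
  · apply hij
    apply valinj
    rw [ZMod.val_add, hval1, hT, h0]
    simp [Nat.mod_self]
  · apply hij
    apply valinj
    rw [ZMod.val_add, hval1]
    have hvi := hvle i
    rw [Nat.mod_eq_of_lt (by omega)]
    omega

lemma grow {n m : ℕ} (χ : Fin n → Fin m → Prop) (hA : ChordalBipartite χ)
    (hrow : ∀ a c : Fin n, a < c → ∀ d : Fin m, χ a d → ¬χ c d →
      ∃ e, d < e ∧ ¬χ a e ∧ χ c e ∧ ∀ j, e < j → (χ a j ↔ χ c j))
    (hcol : ∀ b d : Fin m, b < d → ∀ a : Fin n, χ a b → ¬χ a d →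
      ∃ f, a < f ∧ ¬χ f b ∧ χ f d ∧ ∀ i, f < i → (χ i b ↔ χ i d)) :
    ∀ (N t : ℕ) (r : ℕ → Fin n) (cs : ℕ → Fin m), 1 ≤ t → n ≤ (r t).val + N →
    (∀ k, k < t → r k < r (k+1)) → (∀ k, k < t → cs k < cs (k+1)) →
    χ (r 0) (cs 0) →
    (∀ k, k < t → χ (r k) (cs (k+1))) →
    (∀ k, k < t → χ (r (k+1)) (cs k)) →
    (∀ k, 0 < k → k < t → ¬χ (r k) (cs k)) →
    (∀ k, k + 2 ≤ t → ¬χ (r k) (cs (k+2))) →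
    (∀ k, k + 2 ≤ t → ¬χ (r (k+2)) (cs k)) →
    (∀ k, k + 2 ≤ t → ∀ j, cs (k+2) < j → (χ (r k) j ↔ χ (r (k+1)) j)) →
    (∀ k, k + 2 ≤ t → ∀ i, r (k+2) < i → (χ i (cs k) ↔ χ i (cs (k+1)))) →
    ¬χ (r t) (cs t) → False := by
  intro N
  induction N with
  | zero =>
    intro t r cs ht hb
    intros
    exact absurd (r t).isLt (by omega)
  | succ N ih =>
    intro t r cs ht hb mr mc o0 o2 o3 z1 z2 z3 t4 t5 hdiag
    obtain ⟨s, rfl⟩ : ∃ s, t = s + 1 := ⟨t - 1, by omega⟩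
    obtain ⟨e, he1, he2, he3, he4⟩ :=
      hrow (r s) (r (s+1)) (mr s (by omega)) (cs (s+1)) (o2 s (by omega)) hdiag
    obtain ⟨f, hf1, hf2, hf3, hf4⟩ :=
      hcol (cs s) (cs (s+1)) (mc s (by omega)) (r (s+1)) (o3 s (by omega)) hdiag
    set r' : ℕ → Fin n := fun k => if k ≤ s+1 then r k else f with hr'
    set cs' : ℕ → Fin m := fun k => if k ≤ s+1 then cs k else e with hcs'
    have hrk : ∀ k, k ≤ s+1 → r' k = r k := fun k hk => by
      simp only [hr']; rw [if_pos hk]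
    have hrf : ∀ k, s+2 ≤ k → r' k = f := fun k hk => by
      simp only [hr']; rw [if_neg (by omega)]
    have hck : ∀ k, k ≤ s+1 → cs' k = cs k := fun k hk => by
      simp only [hcs']; rw [if_pos hk]
    have hce : ∀ k, s+2 ≤ k → cs' k = e := fun k hk => by
      simp only [hcs']; rw [if_neg (by omega)]
    have mr' : ∀ k, k < s+2 → r' k < r' (k+1) := by
      intro k hk
      rcases Nat.lt_or_ge k (s+1) with h | h
      · rw [hrk k (by omega), hrk (k+1) (by omega)]; exact mr k h
      · have hks : k = s+1 := by omega
        rw [hrk k (by omega), hrf (k+1) (by omega), hks]; exact hf1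
    have mc' : ∀ k, k < s+2 → cs' k < cs' (k+1) := by
      intro k hk
      rcases Nat.lt_or_ge k (s+1) with h | h
      · rw [hck k (by omega), hck (k+1) (by omega)]; exact mc k h
      · have hks : k = s+1 := by omega
        rw [hck k (by omega), hce (k+1) (by omega), hks]; exact he1
    have o0' : χ (r' 0) (cs' 0) := by
      rw [hrk 0 (by omega), hck 0 (by omega)]; exact o0
    have o2' : ∀ k, k < s+2 → χ (r' k) (cs' (k+1)) := by
      intro k hk
      rcases Nat.lt_or_ge k (s+1) with h | h
      · rw [hrk k (by omega), hck (k+1) (by omega)]; exact o2 k h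
      · have hks : k = s+1 := by omega
        rw [hrk k (by omega), hce (k+1) (by omega), hks]; exact he3
    have o3' : ∀ k, k < s+2 → χ (r' (k+1)) (cs' k) := by
      intro k hk
      rcases Nat.lt_or_ge k (s+1) with h | h
      · rw [hrk (k+1) (by omega), hck k (by omega)]; exact o3 k h
      · have hks : k = s+1 := by omega
        rw [hrf (k+1) (by omega), hck k (by omega), hks]; exact hf3
    have z1' : ∀ k, 0 < k → k < s+2 → ¬χ (r' k) (cs' k) := by
      intro k hk0 hk
      rcases Nat.lt_or_ge k (s+1) with h | h
      · rw [hrk k (by omega), hck k (by omega)]; exact z1 k hk0 h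
      · have hks : k = s+1 := by omega
        rw [hrk k (by omega), hck k (by omega), hks]; exact hdiag
    have z2' : ∀ k, k + 2 ≤ s+2 → ¬χ (r' k) (cs' (k+2)) := by
      intro k hk
      rcases Nat.lt_or_ge (k+2) (s+2) with h | h
      · rw [hrk k (by omega), hck (k+2) (by omega)]; exact z2 k (by omega)
      · have hks : k = s := by omega
        rw [hrk k (by omega), hce (k+2) (by omega), hks]; exact he2
    have z3' : ∀ k, k + 2 ≤ s+2 → ¬χ (r' (k+2)) (cs' k) := by
      intro k hk
      rcases Nat.lt_or_ge (k+2) (s+2) with h | h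
      · rw [hrk (k+2) (by omega), hck k (by omega)]; exact z3 k (by omega)
      · have hks : k = s := by omega
        rw [hrf (k+2) (by omega), hck k (by omega), hks]; exact hf2
    have t4' : ∀ k, k + 2 ≤ s+2 → ∀ j, cs' (k+2) < j → (χ (r' k) j ↔ χ (r' (k+1)) j) := by
      intro k hk j hj
      rcases Nat.lt_or_ge (k+2) (s+2) with h | h
      · rw [hck (k+2) (by omega)] at hj
        rw [hrk k (by omega), hrk (k+1) (by omega)]
        exact t4 k (by omega) j hj
      · have hks : k = s := by omega
        rw [hce (k+2) (by omega)] at hj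
        rw [hrk k (by omega), hrk (k+1) (by omega), hks]
        exact he4 j hj
    have t5' : ∀ k, k + 2 ≤ s+2 → ∀ i, r' (k+2) < i → (χ i (cs' k) ↔ χ i (cs' (k+1))) := by
      intro k hk i hi
      rcases Nat.lt_or_ge (k+2) (s+2) with h | h
      · rw [hrk (k+2) (by omega)] at hi
        rw [hck k (by omega), hck (k+1) (by omega)]
        exact t5 k (by omega) i hi
      · have hks : k = s := by omega
        rw [hrf (k+2) (by omega)] at hi
        rw [hck k (by omega), hck (k+1) (by omega), hks]
        exact hf4 i hi
    have hend : r' (s+2) = f := hrf (s+2) (by omega)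
    have cend : cs' (s+2) = e := hce (s+2) (by omega)
    by_cases hfe : χ f e
    · exact close_cycle χ hA (s+2) (by omega) r' cs' mr' mc' o0' o2' o3' z1' z2' z3' t4' t5'
        (by rw [hend, cend]; exact hfe)
    · refine ih (s+2) r' cs' (by omega) ?_ mr' mc' o0' o2' o3' z1' z2' z3' t4' t5'
        (by rw [hend, cend]; exact hfe)
      rw [hend]
      have : (r (s+1)).val < f.val := hf1
      omega

lemma exists_sorted {n m : ℕ} (A : Fin n → Fin m → Prop) :
    ∃ (σ : Equiv.Perm (Fin n)) (τ : Equiv.Perm (Fin m)),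
      (∀ a c : Fin n, a < c → ∀ d : Fin m, A (σ a) (τ d) → ¬A (σ c) (τ d) →
        ∃ e, d < e ∧ ¬A (σ a) (τ e) ∧ A (σ c) (τ e) ∧
          ∀ j, e < j → (A (σ a) (τ j) ↔ A (σ c) (τ j))) ∧
      (∀ b d : Fin m, b < d → ∀ a : Fin n, A (σ a) (τ b) → ¬A (σ a) (τ d) →
        ∃ f, a < f ∧ ¬A (σ f) (τ b) ∧ A (σ f) (τ d) ∧
          ∀ i, f < i → (A (σ i) (τ b) ↔ A (σ i) (τ d))) := by
  classical
  obtain ⟨⟨σ, τ⟩, hmax⟩ := Finite.exists_max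
    (fun st : Equiv.Perm (Fin n) × Equiv.Perm (Fin m) =>
      ∑ i, ∑ j, if A (st.1 i) (st.2 j) then 2 ^ i.val * 2 ^ j.val else 0)
  refine ⟨σ, τ, ?_, ?_⟩
  · -- rows
    intro a c hac d h1 h2
    have hdD : d ∈ univ.filter (fun j : Fin m => ¬ (A (σ a) (τ j) ↔ A (σ c) (τ j))) := by
      simp only [mem_filter, mem_univ, true_and]
      tauto
    set D := univ.filter (fun j : Fin m => ¬ (A (σ a) (τ j) ↔ A (σ c) (τ j))) with hD
    have hne : D.Nonempty := ⟨d, hdD⟩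
    have heD : ¬ (A (σ a) (τ (D.max' hne)) ↔ A (σ c) (τ (D.max' hne))) :=
      (Finset.mem_filter.mp (D.max'_mem hne)).2
    have htail : ∀ j, D.max' hne < j → (A (σ a) (τ j) ↔ A (σ c) (τ j)) := by
      intro j hj
      by_contra hcon
      exact absurd (D.le_max' j (Finset.mem_filter.mpr ⟨mem_univ _, hcon⟩)) (not_le.mpr hj)
    by_cases hae : A (σ a) (τ (D.max' hne))
    · exfalso
      have hce : ¬ A (σ c) (τ (D.max' hne)) := fun h => heD ⟨fun _ => h, fun _ => hae⟩
      have hlt : (∑ j, if A (σ c) (τ j) then 2 ^ j.val else 0)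
          < ∑ j, if A (σ a) (τ j) then 2 ^ j.val else 0 :=
        rowNum_lt (fun j => A (σ a) (τ j)) (fun j => A (σ c) (τ j)) (D.max' hne) hae hce
          (fun j hj => (htail j hj).symm)
      set S : Fin n → ℕ := fun i0 => ∑ j, if A i0 (τ j) then 2 ^ j.val else 0 with hS
      set σ' : Equiv.Perm (Fin n) := (Equiv.swap a c).trans σ with hσ'
      have hform : ∀ σ0 : Equiv.Perm (Fin n),
          (∑ i, ∑ j, if A (σ0 i) (τ j) then 2 ^ i.val * 2 ^ j.val else 0)
          = ∑ i, 2 ^ i.val * S (σ0 i) := by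
        intro σ0
        refine sum_congr rfl fun i _ => ?_
        rw [hS, mul_sum]
        exact sum_congr rfl fun j _ => by rw [mul_ite, mul_zero]
      have key := sum_swap_pair
        (fun i => 2 ^ i.val * S (σ' i)) (fun i => 2 ^ i.val * S (σ i)) a c (ne_of_lt hac)
        (fun i hia hic => by
          rw [hσ']
          simp [Equiv.swap_apply_of_ne_of_ne hia hic])
      have hfa : σ' a = σ c := by rw [hσ']; simp
      have hfc : σ' c = σ a := by rw [hσ']; simp
      rw [hfa, hfc] at key
      have hmax' := hmax (σ', τ)
      dsimp only at hmax'
      rw [hform σ', hform σ] at hmax'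
      have hpow : (2:ℕ) ^ a.val < 2 ^ c.val := Nat.pow_lt_pow_right (by norm_num) hac
      have cross : 2 ^ a.val * S (σ a) + 2 ^ c.val * S (σ c)
          < 2 ^ a.val * S (σ c) + 2 ^ c.val * S (σ a) := by
        exact mul_add_mul_lt_mul_add_mul hpow hlt
      linarith [key, hmax', cross]
    · have hce : A (σ c) (τ (D.max' hne)) := by tauto
      refine ⟨D.max' hne, ?_, hae, hce, htail⟩
      have hle : d ≤ D.max' hne := D.le_max' d hdD
      rcases lt_or_eq_of_le hle with h | h
      · exact h
      · exact absurd (h ▸ h1) hae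
  · -- columns
    intro b d hbd a h1 h2
    have hdD : a ∈ univ.filter (fun i : Fin n => ¬ (A (σ i) (τ b) ↔ A (σ i) (τ d))) := by
      simp only [mem_filter, mem_univ, true_and]
      tauto
    set D := univ.filter (fun i : Fin n => ¬ (A (σ i) (τ b) ↔ A (σ i) (τ d))) with hD
    have hne : D.Nonempty := ⟨a, hdD⟩
    have heD : ¬ (A (σ (D.max' hne)) (τ b) ↔ A (σ (D.max' hne)) (τ d)) :=
      (Finset.mem_filter.mp (D.max'_mem hne)).2
    have htail : ∀ i, D.max' hne < i → (A (σ i) (τ b) ↔ A (σ i) (τ d)) := by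
      intro i hi
      by_contra hcon
      exact absurd (D.le_max' i (Finset.mem_filter.mpr ⟨mem_univ _, hcon⟩)) (not_le.mpr hi)
    by_cases hae : A (σ (D.max' hne)) (τ b)
    · exfalso
      have hce : ¬ A (σ (D.max' hne)) (τ d) := fun h => heD ⟨fun _ => h, fun _ => hae⟩
      have hlt : (∑ i, if A (σ i) (τ d) then 2 ^ i.val else 0)
          < ∑ i, if A (σ i) (τ b) then 2 ^ i.val else 0 :=
        rowNum_lt (fun i => A (σ i) (τ b)) (fun i => A (σ i) (τ d)) (D.max' hne) hae hce
          (fun i hi => (htail i hi).symm)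
      set S : Fin m → ℕ := fun j0 => ∑ i, if A (σ i) j0 then 2 ^ i.val else 0 with hS
      set τ' : Equiv.Perm (Fin m) := (Equiv.swap b d).trans τ with hτ'
      have hform : ∀ τ0 : Equiv.Perm (Fin m),
          (∑ i, ∑ j, if A (σ i) (τ0 j) then 2 ^ i.val * 2 ^ j.val else 0)
          = ∑ j, 2 ^ j.val * S (τ0 j) := by
        intro τ0
        rw [Finset.sum_comm]
        refine sum_congr rfl fun j _ => ?_
        rw [hS, mul_sum]
        refine sum_congr rfl fun i _ => ?_
        by_cases h : A (σ i) (τ0 j) <;> simp [h, mul_comm]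
      have key := sum_swap_pair
        (fun j => 2 ^ j.val * S (τ' j)) (fun j => 2 ^ j.val * S (τ j)) b d (ne_of_lt hbd)
        (fun j hjb hjd => by
          rw [hτ']
          simp [Equiv.swap_apply_of_ne_of_ne hjb hjd])
      have hfa : τ' b = τ d := by rw [hτ']; simp
      have hfc : τ' d = τ b := by rw [hτ']; simp
      rw [hfa, hfc] at key
      have hmax' := hmax (σ, τ')
      dsimp only at hmax'
      rw [hform τ', hform τ] at hmax'
      have hpow : (2:ℕ) ^ b.val < 2 ^ d.val := Nat.pow_lt_pow_right (by norm_num) hbd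
      have cross : 2 ^ b.val * S (τ b) + 2 ^ d.val * S (τ d)
          < 2 ^ b.val * S (τ d) + 2 ^ d.val * S (τ b) := by
        exact mul_add_mul_lt_mul_add_mul hpow hlt
      linarith [key, hmax', cross]
    · have hce : A (σ (D.max' hne)) (τ d) := by tauto
      refine ⟨D.max' hne, ?_, hae, hce, htail⟩
      have hle : a ≤ D.max' hne := D.le_max' a hdD
      rcases lt_or_eq_of_le hle with h | h
      · exact h
      · exact absurd (h ▸ h1) hae

lemma gamma_free {n m : ℕ} (χ : Fin n → Fin m → Prop) (hA : ChordalBipartite χ)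
    (hrow : ∀ a c : Fin n, a < c → ∀ d : Fin m, χ a d → ¬χ c d →
      ∃ e, d < e ∧ ¬χ a e ∧ χ c e ∧ ∀ j, e < j → (χ a j ↔ χ c j))
    (hcol : ∀ b d : Fin m, b < d → ∀ a : Fin n, χ a b → ¬χ a d →
      ∃ f, a < f ∧ ¬χ f b ∧ χ f d ∧ ∀ i, f < i → (χ i b ↔ χ i d)) :
    ∀ a c b d, a < c → b < d → χ a b → χ a d → χ c b → χ c d := by
  intro a c b d hac hbd hab had hcb
  by_contra hcd
  refine grow χ hA hrow hcol n 1
    (fun k => match k with | 0 => a | _+1 => c)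
    (fun k => match k with | 0 => b | _+1 => d)
    le_rfl (by omega) ?_ ?_ hab ?_ ?_ ?_ ?_ ?_ ?_ ?_ hcd
  · intro k hk
    have : k = 0 := by omega
    subst this; exact hac
  · intro k hk
    have : k = 0 := by omega
    subst this; exact hbd
  · intro k hk
    have : k = 0 := by omega
    subst this; exact had
  · intro k hk
    have : k = 0 := by omega
    subst this; exact hcb
  · intro k h1 h2
    exact absurd h1 (by omega)
  · intro k h1
    exact absurd h1 (by omega)
  · intro k h1
    exact absurd h1 (by omega)
  · intro k h1
    exact absurd h1 (by omega)
  · intro k h1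
    exact absurd h1 (by omega)

lemma ChordalBipartite.relabel {n m : ℕ} {A : Fin n → Fin m → Prop} (h : ChordalBipartite A)
    (σ : Equiv.Perm (Fin n)) (τ : Equiv.Perm (Fin m)) :
    ChordalBipartite (fun i j => A (σ i) (τ j)) := by
  intro p hp x y hx hy h1 h2
  obtain ⟨i, j, hij⟩ := h p hp (fun i => σ (x i)) (fun i => τ (y i))
    (fun i i' hii => hx (σ.injective hii)) (fun i i' hii => hy (τ.injective hii)) h1 h2
  exact ⟨i, j, hij⟩

/-- Ohsugi–Hibi ordering: if the bipartite graph given by the 0/1 matrix `A`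
is chordal bipartite, then the rows and columns of `A` can be relabelled so that `A` has no
2×2 submatrix (rows `a < c`, columns `b < d`) equal to `[[1,1],[1,0]]`; i.e. whenever
`A_{a,b} = A_{a,d} = A_{c,b} = 1` with `a < c` and `b < d`, also `A_{c,d} = 1`. -/
theorem stmt6 {n m : ℕ} (A : Fin n → Fin m → Prop) (hA : ChordalBipartite A) :
    ∃ (σ : Equiv.Perm (Fin n)) (τ : Equiv.Perm (Fin m)),
      ∀ (a c : Fin n) (b d : Fin m), a < c → b < d →
        A (σ a) (τ b) → A (σ a) (τ d) → A (σ c) (τ b) → A (σ c) (τ d) := by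
  obtain ⟨σ, τ, hrow, hcol⟩ := exists_sorted A
  exact ⟨σ, τ, fun a c b d hac hbd h1 h2 h3 =>
    gamma_free (fun i j => A (σ i) (τ j)) (hA.relabel σ τ) hrow hcol a c b d hac hbd h1 h2 h3⟩
end

section
/- Fix n ≥ 1 and a 0/1-matrix A with no submatrix [[1,1],[1,0]] in positions (a,b),(a,d),(c,b),(c,d) with a < c, b < d (i.e., whenever A_{a,b}=A_{a,d}=A_{c,b}=1 with a<c, b<d, also A_{c,d}=1). Let H be the graph on vertex set {(i,j) : A_{i,j}=1} with edges {(a,d),(c,b)} whenever a < c, b < d and A_{a,b}=A_{a,d}=A_{c,b}=A_{c,d}=1. For 1 ≤ i ≤ n−1, let H_i be the subgraph of H consisting of all edges whose upper-right endpoint lies in row i, i.e., edges {(i,d),(c,b)} with c > i and b < d. Then each H_i is co-chordal: the complement of H_i (on the vertex set of H_i) is a chordal graph. -/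
/-- A graph is chordal if every cycle of length at least 4 has a chord
(an edge of the graph between two non-consecutive vertices of the cycle). -/
def IsChordal {W : Type} (G : SimpleGraph W) : Prop :=
  ∀ (p : ℕ), 4 ≤ p → ∀ v : ZMod p → W, Function.Injective v →
    (∀ i, G.Adj (v i) (v (i + 1))) →
    ∃ i j : ZMod p, G.Adj (v i) (v j) ∧ j ≠ i + 1 ∧ i ≠ j + 1

/-- The graph `H` of Construction 3.5: vertices are the positions of the ones of the
0/1 matrix `A`, and edges are the anti-diagonals `{(a,d),(c,b)}` (`a < c`, `b < d`) of
the all-ones 2×2 submatrices of `A`. -/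
def Hgraph {n m : ℕ} (A : Fin n → Fin m → Prop) :
    SimpleGraph {p : Fin n × Fin m // A p.1 p.2} where
  Adj p q := (p.1.1 < q.1.1 ∧ q.1.2 < p.1.2 ∧ A p.1.1 q.1.2 ∧ A q.1.1 p.1.2) ∨
             (q.1.1 < p.1.1 ∧ p.1.2 < q.1.2 ∧ A q.1.1 p.1.2 ∧ A p.1.1 q.1.2)
  symm := by tauto
  loopless := ⟨by rintro p (⟨h, _⟩ | ⟨h, _⟩) <;> exact absurd h (lt_irrefl _)⟩

/-- The subgraph `H_i` of `H`, on the vertices of `H` in rows `≥ i`, consisting of the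
edges of `H` whose upper-right endpoint lies in row `i`. -/
def Hi {n m : ℕ} (A : Fin n → Fin m → Prop) (i : Fin n) :
    SimpleGraph {p : Fin n × Fin m // A p.1 p.2 ∧ i ≤ p.1.1} where
  Adj p q := (Hgraph A).Adj ⟨p.1, p.2.1⟩ ⟨q.1, q.2.1⟩ ∧ (p.1.1 = i ∨ q.1.1 = i)
  symm := ⟨by
    rintro p q ⟨h, h'⟩
    exact ⟨(Hgraph A).symm.symm _ _ h, h'.symm⟩⟩
  loopless := ⟨by rintro p ⟨h, _⟩; exact (Hgraph A).loopless.irrefl _ h⟩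


/-!
Two vertices of `H_i` in the same class (row `i`, resp. rows below `i`) are never adjacent, so
`H_i` is bipartite and its complement is the union of two cliques plus some edges between
them. In such a graph a cycle of length at least five always has two non-consecutive vertices
in the same clique, hence a chord; a chordless 4-cycle would exhibit an induced `2K₂` in `H_i`.
And `H_i` is `2K₂`-free (a chain graph): for edges `(i,d)–(c,b)` and `(i,d')–(c',b')`, either
`b < d'`, and Γ-freeness on rows `i < c` gives the edge `(i,d')–(c,b)`, or `b' < d' ≤ b < d`,
and it gives `(i,d)–(c',b')`.
-/

/-- `B` is a bipartite chain graph (a `2K₂`-free bipartite graph) with sides `P` and `¬ P`. -/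
structure IsChainGraph {W : Type} (B : SimpleGraph W) (P : W → Prop) : Prop where
  iff_not_of_adj : ∀ ⦃u v⦄, B.Adj u v → (P u ↔ ¬P v)
  adj_or_adj : ∀ ⦃u v x y⦄, P u → P v → ¬P x → ¬P y →
    B.Adj u x → B.Adj v y → B.Adj u y ∨ B.Adj v x

lemma ZMod.natCast_ne_natCast_of_lt {p a b : ℕ} (ha : a < p) (hb : b < p) (hab : a ≠ b) :
    (a : ZMod p) ≠ b := fun h => hab <| by
  simpa [ZMod.val_natCast_of_lt ha, ZMod.val_natCast_of_lt hb] using congrArg ZMod.val h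

namespace IsChainGraph

variable {W : Type} {B : SimpleGraph W} {P : W → Prop}

lemma not_induced_square (hB : IsChainGraph B P) {a b c d : W}
    (hac : B.Adj a c) (hbd : B.Adj b d)
    (hab : ¬B.Adj a b) (hbc : ¬B.Adj b c) (hcd : ¬B.Adj c d) (hda : ¬B.Adj d a) : False := by
  have hPac := hB.iff_not_of_adj hac
  have hPbd := hB.iff_not_of_adj hbd
  by_cases hPa : P a <;> by_cases hPb : P b
  · rcases hB.adj_or_adj hPa hPb (hPac.1 hPa) (hPbd.1 hPb) hac hbd with h | h
    exacts [hda h.symm, hbc h]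
  · have hPd : P d := by tauto
    rcases hB.adj_or_adj hPa hPd (hPac.1 hPa) hPb hac hbd.symm with h | h
    exacts [hab h, hcd h.symm]
  · have hPc : P c := by tauto
    rcases hB.adj_or_adj hPb hPc (hPbd.1 hPb) hPa hbd hac.symm with h | h
    exacts [hab h.symm, hcd h]
  · have hPc : P c := by tauto
    have hPd : P d := by tauto
    rcases hB.adj_or_adj hPc hPd hPa hPb hac.symm hbd.symm with h | h
    exacts [hbc h.symm, hda h]

theorem isChordal_compl (hB : IsChainGraph B P) : IsChordal Bᶜ := by
  intro p hp v hv hcycle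
  by_contra! hno
  have hdiag : ∀ (j j' : ZMod p) (k : ℕ), j' = j + k → 2 ≤ k → k + 2 ≤ p →
      B.Adj (v j) (v j') := by
    rintro j _ k rfl hk hkp
    by_contra hnadj
    have hk0 : (k : ZMod p) ≠ 0 := by
      simpa using ZMod.natCast_ne_natCast_of_lt (p := p) (b := 0) (by omega) (by omega) (by omega)
    have hk1 : (k : ZMod p) ≠ 1 := by
      simpa using ZMod.natCast_ne_natCast_of_lt (p := p) (b := 1) (by omega) (by omega) (by omega)
    have hk_succ : (k : ZMod p) + 1 ≠ 0 := by
      simpa using ZMod.natCast_ne_natCast_of_lt (p := p) (a := k + 1) (b := 0)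
        (by omega) (by omega) (by omega)
    have := hno j (j + k) ⟨hv.ne (by simpa using hk0), hnadj⟩ (by simpa using hk1)
    exact hk_succ (by linear_combination -this)
  obtain rfl | hp := eq_or_lt_of_le hp
  · have hedge : ∀ j : ZMod 4, ¬B.Adj (v j) (v (j + 1)) := fun j => (hcycle j).2
    exact hB.not_induced_square (hdiag 0 2 2 (by decide) le_rfl le_rfl)
      (hdiag 1 3 2 (by decide) le_rfl le_rfl) (hedge 0) (hedge 1) (hedge 2) (hedge 3)
  · -- The pairs (0,2), (2,4), (1,3), (0,3), (1,4) cannot all straddle the bipartition.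
    have h02 := hB.iff_not_of_adj (hdiag 0 2 2 (by norm_num) le_rfl (by omega))
    have h24 := hB.iff_not_of_adj (hdiag 2 4 2 (by norm_num) le_rfl (by omega))
    have h13 := hB.iff_not_of_adj (hdiag 1 3 2 (by norm_num) le_rfl (by omega))
    have h03 := hB.iff_not_of_adj (hdiag 0 3 3 (by norm_num) (by norm_num) (by omega))
    have h14 := hB.iff_not_of_adj (hdiag 1 4 3 (by norm_num) (by norm_num) (by omega))
    tauto

end IsChainGraph

namespace Hi

variable {n m : ℕ} {A : Fin n → Fin m → Prop} {i : Fin n}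

lemma row_eq_iff_ne_of_adj {u v : {p : Fin n × Fin m // A p.1 p.2 ∧ i ≤ p.1.1}}
    (h : (Hi A i).Adj u v) : u.1.1 = i ↔ ¬v.1.1 = i := by
  obtain ⟨hH, hrow⟩ := h
  have hne : u.1.1 ≠ v.1.1 := by
    rcases hH with ⟨h, -⟩ | ⟨h, -⟩
    exacts [h.ne, h.ne']
  grind

lemma adj_iff_of_row_eq {u x : {p : Fin n × Fin m // A p.1 p.2 ∧ i ≤ p.1.1}}
    (hu : u.1.1 = i) (hx : x.1.1 ≠ i) :
    (Hi A i).Adj u x ↔ x.1.2 < u.1.2 ∧ A i x.1.2 ∧ A x.1.1 u.1.2 := by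
  have hix : i < x.1.1 := lt_of_le_of_ne x.2.2 (Ne.symm hx)
  simp only [Hi, Hgraph, hu, true_or, and_true]
  constructor
  · rintro (⟨-, h⟩ | ⟨h, -⟩)
    exacts [h, absurd h hix.not_gt]
  · exact fun h => Or.inl ⟨hix, h⟩

end Hi

theorem isChainGraph_Hi {n m : ℕ} (A : Fin n → Fin m → Prop)
    (hA : ∀ (a c : Fin n) (b d : Fin m), a < c → b < d → A a b → A a d → A c b → A c d)
    (i : Fin n) : IsChainGraph (Hi A i) (fun p => p.1.1 = i) where
  iff_not_of_adj _ _ := Hi.row_eq_iff_ne_of_adj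
  adj_or_adj u v x y hu hv hx hy hux hvy := by
    rw [Hi.adj_iff_of_row_eq hu hx] at hux
    rw [Hi.adj_iff_of_row_eq hv hy] at hvy
    rw [Hi.adj_iff_of_row_eq hu hy, Hi.adj_iff_of_row_eq hv hx]
    obtain ⟨hxu, hAix, -⟩ := hux
    obtain ⟨hyv, hAiy, -⟩ := hvy
    have hix : i < x.1.1 := lt_of_le_of_ne x.2.2 (Ne.symm hx)
    have hiy : i < y.1.1 := lt_of_le_of_ne y.2.2 (Ne.symm hy)
    have hAiv : A i v.1.2 := by simpa [hv] using v.2.1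
    have hAiu : A i u.1.2 := by simpa [hu] using u.2.1
    rcases lt_or_ge x.1.2 v.1.2 with hxv | hvx
    · exact Or.inr ⟨hxv, hAix, hA _ _ _ _ hix hxv hAix hAiv x.2.1⟩
    · have hyu : y.1.2 < u.1.2 := hyv.trans (hvx.trans_lt hxu)
      exact Or.inl ⟨hyu, hAiy, hA _ _ _ _ hiy hyu hAiy hAiu y.2.1⟩

theorem stmt7_general {n m : ℕ} (A : Fin n → Fin m → Prop)
    (hA : ∀ (a c : Fin n) (b d : Fin m), a < c → b < d →
      A a b → A a d → A c b → A c d)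
    (i : Fin n) :
    IsChordal ((Hi A i)ᶜ) :=
  (isChainGraph_Hi A hA i).isChordal_compl

/-- if the 0/1 matrix `A` is Γ-free (no submatrix `[[1,1],[1,0]]` with rows
`a < c` and columns `b < d`), then for each `1 ≤ i ≤ n-1` the subgraph `H_i` of `H` is
co-chordal: the complement of `H_i` on the vertex set of `H_i` is chordal. -/
theorem stmt7 {n m : ℕ} (A : Fin n → Fin m → Prop)
    (hA : ∀ (a c : Fin n) (b d : Fin m), a < c → b < d →
      A a b → A a d → A c b → A c d)
    (i : Fin n) (hi : (i : ℕ) + 2 ≤ n) :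
    IsChordal ((Hi A i)ᶜ) :=
  stmt7_general A hA i
end

section
/- Let H be the bipartite graph with parts E' = {e_2,...,e_d} and F = {f_1,...,f_{d-1}} (d ≥ 2) and edge set {e_i f_j : 1 ≤ j < i ≤ d}. For a subset S of the vertex set, the complement graph (H_S)^c of the induced subgraph on S is disconnected if and only if S ∩ E' ≠ ∅, S ∩ F ≠ ∅, and for every f_j ∈ S and every e_i ∈ S one has i > j (equivalently there is no pair e_i ∈ S, f_j ∈ S with i ≤ j). Moreover in that case (H_S)^c has exactly 2 connected components. -/
/-- Vertex set `{e_2,…,e_d} ⊔ {f_1,…,f_{d-1}}`. -/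
def V19 (d : ℕ) := {a : ℕ // 2 ≤ a ∧ a ≤ d} ⊕ {b : ℕ // 1 ≤ b ∧ b ≤ d - 1}

instance (d : ℕ) : DecidableEq (V19 d) := by unfold V19; infer_instance

/-- The bipartite graph `H` with edges `e_i f_j` for `1 ≤ j < i ≤ d`. -/
def H19 (d : ℕ) : SimpleGraph (V19 d) :=
  SimpleGraph.fromRel (fun u v =>
    ∃ (i : {a : ℕ // 2 ≤ a ∧ a ≤ d}) (j : {b : ℕ // 1 ≤ b ∧ b ≤ d - 1}),
      u = Sum.inl i ∧ v = Sum.inr j ∧ (j : ℕ) < (i : ℕ))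

/-!
Both sides `E'` and `F` are independent in `H`, so they are cliques in `(H_S)ᶜ`. Hence `(H_S)ᶜ`
is connected unless `S` meets both sides and no edge of `(H_S)ᶜ` crosses between them, i.e. no
`e_i, f_j ∈ S` with `i ≤ j`; in that case the two sides are exactly the two components.
-/

theorem Bool.eq_or_eq_of_ne {a b : Bool} (h : a ≠ b) (c : Bool) : c = a ∨ c = b := by
  cases a <;> cases b <;> cases c <;> simp_all

namespace SimpleGraph

variable {V : Type*} {G : SimpleGraph V} {f : V → Bool}

theorem reachable_iff_eq_of_adj_imp_eq (hfib : ∀ u v, f u = f v → G.Reachable u v)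
    (hadj : ∀ u v, G.Adj u v → f u = f v) {u v : V} :
    G.Reachable u v ↔ f u = f v := by
  refine ⟨?_, hfib u v⟩
  rintro ⟨p⟩
  induction p with
  | nil => rfl
  | cons h _ ih => exact (hadj _ _ h).trans ih

theorem preconnected_of_adj_of_ne (hfib : ∀ u v, f u = f v → G.Reachable u v) {a b : V}
    (hab : G.Adj a b) (hne : f a ≠ f b) : G.Preconnected := by
  have reach_a (x : V) : G.Reachable x a := by
    rcases Bool.eq_or_eq_of_ne hne (f x) with hx | hx
    · exact hfib x a hx
    · exact (hfib x b hx).trans hab.reachable.symm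
  exact fun x y => (reach_a x).trans (reach_a y).symm

theorem preconnected_iff_of_fibers_reachable (hfib : ∀ u v, f u = f v → G.Reachable u v) :
    G.Preconnected ↔ ¬ Function.Surjective f ∨ ∃ u v, G.Adj u v ∧ f u ≠ f v := by
  constructor
  · intro hG
    by_contra! ⟨hsurj, hadj⟩
    obtain ⟨u, hu⟩ := hsurj true
    obtain ⟨v, hv⟩ := hsurj false
    simpa [hu, hv] using (reachable_iff_eq_of_adj_imp_eq hfib hadj).1 (hG u v)
  · rintro (hf | ⟨a, b, hab, hne⟩)
    · refine fun u v => hfib u v (by_contra fun hne => hf fun c => ?_)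
      rcases Bool.eq_or_eq_of_ne hne c with rfl | rfl
      exacts [⟨u, rfl⟩, ⟨v, rfl⟩]
    · exact preconnected_of_adj_of_ne hfib hab hne

theorem card_connectedComponent_eq_two_of_not_preconnected
    (hfib : ∀ u v, f u = f v → G.Reachable u v) (hG : ¬ G.Preconnected) :
    Nat.card G.ConnectedComponent = 2 := by
  obtain ⟨hsurj, hadj⟩ := by simpa using mt (preconnected_iff_of_fibers_reachable hfib).2 hG
  have hreach (u v : V) : G.Reachable u v ↔ f u = f v := reachable_iff_eq_of_adj_imp_eq hfib hadj
  let F : G.ConnectedComponent → Bool :=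
    ConnectedComponent.lift f fun u v p _ => (hreach u v).1 ⟨p⟩
  have hF : Function.Bijective F := by
    refine ⟨ConnectedComponent.ind₂ fun u v h => ConnectedComponent.sound ((hreach u v).2 h), ?_⟩
    intro b
    obtain ⟨u, hu⟩ := hsurj b
    exact ⟨G.connectedComponentMk u, hu⟩
  simp [Nat.card_eq_of_bijective F hF]

end SimpleGraph

namespace H19

open SimpleGraph

variable {d : ℕ} {S : Set (V19 d)}

theorem isLeft_ne_of_adj {u v : V19 d} (h : (H19 d).Adj u v) : u.isLeft ≠ v.isLeft := by
  obtain ⟨-, ⟨i, j, rfl, rfl, -⟩ | ⟨i, j, rfl, rfl, -⟩⟩ := h <;> simp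

theorem adj_inl_inr_iff {i : {a : ℕ // 2 ≤ a ∧ a ≤ d}} {j : {b : ℕ // 1 ≤ b ∧ b ≤ d - 1}} :
    (H19 d).Adj (.inl i) (.inr j) ↔ (j : ℕ) < i := by
  refine ⟨?_, fun h => ⟨Sum.inl_ne_inr, .inl ⟨i, j, rfl, rfl, h⟩⟩⟩
  rintro ⟨-, ⟨_, _, ⟨⟩, ⟨⟩, h⟩ | ⟨_, _, ⟨⟩, -⟩⟩
  exact h

theorem compl_induce_adj_inl_inr_iff {i : {a : ℕ // 2 ≤ a ∧ a ≤ d}}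
    {j : {b : ℕ // 1 ≤ b ∧ b ≤ d - 1}} (hi : Sum.inl i ∈ S) (hj : Sum.inr j ∈ S) :
    ((H19 d).induce S)ᶜ.Adj ⟨Sum.inl i, hi⟩ ⟨Sum.inr j, hj⟩ ↔ (i : ℕ) ≤ j := by
  rw [compl_adj, induce_adj, adj_inl_inr_iff, not_lt]
  exact and_iff_right fun h => Sum.inl_ne_inr (congrArg Subtype.val h)

theorem compl_induce_reachable_of_isLeft_eq (u v : S) (h : u.1.isLeft = v.1.isLeft) :
    ((H19 d).induce S)ᶜ.Reachable u v := by
  by_cases huv : u = v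
  · exact huv ▸ Reachable.refl _
  · exact Adj.reachable ⟨huv, fun hadj => isLeft_ne_of_adj hadj h⟩

theorem surjective_isLeft_iff :
    Function.Surjective (fun u : S => u.1.isLeft) ↔
      (∃ i, Sum.inl i ∈ S) ∧ ∃ j, Sum.inr j ∈ S := by
  refine ⟨fun h => ⟨?_, ?_⟩, fun ⟨⟨i, hi⟩, ⟨j, hj⟩⟩ b => ?_⟩
  · obtain ⟨⟨i | j, hu⟩, hb⟩ := h true
    · exact ⟨i, hu⟩
    · simp at hb
  · obtain ⟨⟨i | j, hu⟩, hb⟩ := h false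
    · simp at hb
    · exact ⟨j, hu⟩
  · cases b
    exacts [⟨⟨_, hj⟩, rfl⟩, ⟨⟨_, hi⟩, rfl⟩]

theorem exists_compl_induce_adj_isLeft_ne_iff :
    (∃ u v : S, ((H19 d).induce S)ᶜ.Adj u v ∧ u.1.isLeft ≠ v.1.isLeft) ↔
      ∃ i j, Sum.inl i ∈ S ∧ Sum.inr j ∈ S ∧ (i : ℕ) ≤ (j : ℕ) := by
  refine ⟨?_, fun ⟨i, j, hi, hj, hij⟩ =>
    ⟨_, _, (compl_induce_adj_inl_inr_iff hi hj).2 hij, by simp⟩⟩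
  rintro ⟨⟨i | j, hu⟩, ⟨i' | j', hv⟩, hadj, hne⟩ <;> simp at hne
  · exact ⟨i, j', hu, hv, (compl_induce_adj_inl_inr_iff hu hv).1 hadj⟩
  · exact ⟨i', j, hv, hu, (compl_induce_adj_inl_inr_iff hv hu).1 hadj.symm⟩

end H19

theorem stmt9_general (d : ℕ) (S : Set (V19 d)) :
    (¬ (((H19 d).induce S)ᶜ).Preconnected ↔
      ((∃ i, Sum.inl i ∈ S) ∧ (∃ j, Sum.inr j ∈ S) ∧
        ∀ i j, Sum.inl i ∈ S → Sum.inr j ∈ S → (j : ℕ) < (i : ℕ))) ∧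
    (¬ (((H19 d).induce S)ᶜ).Preconnected →
      Nat.card (((H19 d).induce S)ᶜ).ConnectedComponent = 2) := by
  have hfib := H19.compl_induce_reachable_of_isLeft_eq (S := S)
  refine ⟨?_, SimpleGraph.card_connectedComponent_eq_two_of_not_preconnected hfib⟩
  rw [SimpleGraph.preconnected_iff_of_fibers_reachable hfib, H19.surjective_isLeft_iff,
    H19.exists_compl_induce_adj_isLeft_ne_iff, not_or, not_not]
  simp only [not_exists, not_and, not_le, and_assoc]

/-- for a subset `S` of the vertices of `H`, the complement `(H_S)ᶜ` of the
induced subgraph on `S` is disconnected if and only if `S` meets both sides of the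
bipartition and `i > j` for every `e_i ∈ S` and `f_j ∈ S`; moreover in that case `(H_S)ᶜ`
has exactly two connected components. -/
theorem stmt9 (d : ℕ) (hd : 2 ≤ d) (S : Set (V19 d)) :
    (¬ (((H19 d).induce S)ᶜ).Preconnected ↔
      ((∃ i, Sum.inl i ∈ S) ∧ (∃ j, Sum.inr j ∈ S) ∧
        ∀ i j, Sum.inl i ∈ S → Sum.inr j ∈ S → (j : ℕ) < (i : ℕ))) ∧
    (¬ (((H19 d).induce S)ᶜ).Preconnected →
      Nat.card (((H19 d).induce S)ᶜ).ConnectedComponent = 2) :=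
  stmt9_general d S
end

section
/- Let Δ be the pure (2n−3)-dimensional simplicial complex whose facets are σ_{i,j} = ({1,...,n}\{i}) ∪ ({n+1,...,2n}\{n+j}) for 1 ≤ i,j ≤ n (n ≥ 2), with the shelling order by (j,i) lexicographically. In this shelling, the last facet σ_{n,2n} intersects the union of all earlier facets in its entire boundary: every codimension-one face of σ_{n,2n} is contained in some earlier facet. -/
/-- The facet `σ_{a,b} = ({1,…,n}\{a}) ∪ ({n+1,…,2n}\{b})` of `Δ_{<w}`. -/
def facet (n : ℕ) (a b : Fin n) : Finset (Fin n ⊕ Fin n) :=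
  Finset.univ \ {Sum.inl a, Sum.inr b}

/-- in the shelling order on the facets `σ_{a,b}` of the pure
`(2n−3)`-dimensional complex `Δ_{<w}` (`n ≥ 2`), the last facet `σ_{n,2n}` meets the union
of the earlier facets in its entire boundary: every codimension-one face
`σ_{n,2n} \ {x}` is contained in some earlier facet `σ_{a,b}`, `(a,b) ≠ (last, last)`. -/
theorem stmt13 (n : ℕ) (hn : 2 ≤ n) (x : Fin n ⊕ Fin n)
    (hx : x ∈ facet n (⟨n-1, by omega⟩ : Fin n) (⟨n-1, by omega⟩ : Fin n)) :
    ∃ a b : Fin n, (a, b) ≠ ((⟨n-1, by omega⟩ : Fin n), (⟨n-1, by omega⟩ : Fin n)) ∧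
      (facet n (⟨n-1, by omega⟩ : Fin n) (⟨n-1, by omega⟩ : Fin n)).erase x ⊆ facet n a b := by
  simp only [facet, Finset.mem_sdiff, Finset.mem_insert, Finset.mem_singleton] at hx
  obtain ⟨-, hx⟩ := hx
  obtain c | c := x
  · refine ⟨c, ⟨n-1, by omega⟩, ?_, ?_⟩
    · intro h
      exact hx (Or.inl (congrArg Sum.inl (congrArg Prod.fst h)))
    · intro y hy
      simp only [facet, Finset.mem_erase, Finset.mem_sdiff, Finset.mem_insert,
        Finset.mem_singleton] at hy ⊢
      tauto
  · refine ⟨⟨n-1, by omega⟩, c, ?_, ?_⟩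
    · intro h
      exact hx (Or.inr (congrArg Sum.inr (congrArg Prod.snd h)))
    · intro y hy
      simp only [facet, Finset.mem_erase, Finset.mem_sdiff, Finset.mem_insert,
        Finset.mem_singleton] at hy ⊢
      tauto
end
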